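/- Let X be a real Hilbert space, let B : X → X be β-Lipschitzian with β > 0, let W : X → X be α-strongly monotone with α > 0, let ε ∈ (0, α), let γ ∈ (0, (α−ε)/β], and set K = W − γB. Then: (i) K is ε-strongly monotone, i.e., ⟪x−y, Kx−Ky⟫ ≥ ε‖x−y‖² for all x, y ∈ X; (ii) if in addition α = 1 and W = Id, then K is cocoercive with constant 1/(2−ε), i.e., (1/(2−ε))K is firmly nonexpansive. -/

import Mathlib

/-!
Part (i): the strong monotonicity of `W` gains `α‖u‖²` and the Lipschitz perturbation `γB`
loses at most `γβ‖u‖² ≤ (α - ε)‖u‖²`. Part (ii): with `W = Id`, `K` is the identity minus a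
`(1 - ε)`-Lipschitz map, which gives `‖Ku‖² ≤ (2 - ε)⟪u, Ku⟫`, and cocoercivity with constant
`s` is the same as nonexpansiveness of `2sK - Id`.
-/

open RealInnerProductSpace

section InnerProductSpace

variable {X : Type*} [NormedAddCommGroup X] [InnerProductSpace ℝ X]

theorem mul_norm_sq_le_inner_sub_smul {u a d : X} {α β γ ε : ℝ}
    (ha : α * ‖u‖ ^ 2 ≤ ⟪u, a⟫) (hd : ‖d‖ ≤ β * ‖u‖) (hγ : 0 ≤ γ)
    (hγβ : γ * β ≤ α - ε) :
    ε * ‖u‖ ^ 2 ≤ ⟪u, a - γ • d⟫ := by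
  have hud : ⟪u, d⟫ ≤ β * ‖u‖ ^ 2 :=
    calc ⟪u, d⟫ ≤ ‖u‖ * ‖d‖ := real_inner_le_norm u d
      _ ≤ ‖u‖ * (β * ‖u‖) := by gcongr
      _ = β * ‖u‖ ^ 2 := by ring
  rw [inner_sub_right, real_inner_smul_right]
  nlinarith [mul_le_mul_of_nonneg_left hud hγ, sq_nonneg ‖u‖]

/-- With `a = ‖u‖`, `t = ‖w‖` and `⟪u, w⟫ ≥ -a t`, the difference of the two sides is at least
`(1 - ε) a² - ε a t - t² = ((1 - ε) a - t)(a + t) ≥ 0`. -/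
theorem norm_sub_sq_le_inner_of_norm_le {u w : X} {ε : ℝ} (hε : 0 ≤ ε)
    (hw : ‖w‖ ≤ (1 - ε) * ‖u‖) :
    ‖u - w‖ ^ 2 ≤ (2 - ε) * ⟪u, u - w⟫ := by
  have huw : -(‖u‖ * ‖w‖) ≤ ⟪u, w⟫ := neg_le_of_abs_le (abs_real_inner_le_norm u w)
  rw [norm_sub_sq_real, inner_sub_right, real_inner_self_eq_norm_sq]
  nlinarith [mul_nonneg (sub_nonneg.mpr hw) (add_nonneg (norm_nonneg u) (norm_nonneg w)),
    mul_le_mul_of_nonneg_left huw hε]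

theorem norm_two_mul_smul_sub_le {u v : X} {s : ℝ} (hs : 0 ≤ s)
    (h : s * ‖v‖ ^ 2 ≤ ⟪u, v⟫) :
    ‖(2 * s) • v - u‖ ≤ ‖u‖ := by
  have hsq : ‖(2 * s) • v - u‖ ^ 2 ≤ ‖u‖ ^ 2 := by
    rw [norm_sub_sq_real, norm_smul, real_inner_smul_left, real_inner_comm,
      Real.norm_of_nonneg (by positivity)]
    nlinarith [mul_le_mul_of_nonneg_left h hs]
  exact (sq_le_sq₀ (norm_nonneg _) (norm_nonneg _)).mp hsq

end InnerProductSpace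

theorem stmt_19_general
    {X : Type*} [NormedAddCommGroup X] [InnerProductSpace ℝ X]
    (B W : X → X) (β α ε γ : ℝ) (hβ : 0 < β)
    (hBlip : ∀ x y, ‖B x - B y‖ ≤ β * ‖x - y‖)
    (hWsm : ∀ x y, α * ‖x - y‖ ^ 2 ≤ ⟪x - y, W x - W y⟫)
    (hε : ε ∈ Set.Ioo (0:ℝ) α)
    (hγ : γ ∈ Set.Ioc (0:ℝ) ((α - ε) / β))
    (K : X → X) (hK : ∀ x, K x = W x - γ • B x) :
    -- (i) K is ε-strongly monotone
    (∀ x y, ε * ‖x - y‖ ^ 2 ≤ ⟪x - y, K x - K y⟫) ∧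
    -- (ii) if α = 1 and W = Id, then (1/(2−ε))K is firmly nonexpansive,
    -- i.e. 2·(1/(2−ε))·K − Id is nonexpansive
    ((α = 1 ∧ W = fun x => x) →
      ∀ x y, ‖(2 * (1 / (2 - ε))) • (K x - K y) - (x - y)‖ ≤ ‖x - y‖) := by
  obtain ⟨hε0, hεα⟩ := hε
  obtain ⟨hγ0, hγle⟩ := hγ
  have hγβ : γ * β ≤ α - ε := (le_div_iff₀ hβ).mp hγle
  have hKsub : ∀ x y, K x - K y = (W x - W y) - γ • (B x - B y) := fun x y => by
    rw [hK, hK, smul_sub]; abel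
  refine ⟨fun x y => hKsub x y ▸
    mul_norm_sq_le_inner_sub_smul (hWsm x y) (hBlip x y) hγ0.le hγβ, ?_⟩
  rintro ⟨rfl, rfl⟩ x y
  have hγd : ‖γ • (B x - B y)‖ ≤ (1 - ε) * ‖x - y‖ :=
    calc ‖γ • (B x - B y)‖ = γ * ‖B x - B y‖ := by rw [norm_smul, Real.norm_of_nonneg hγ0.le]
      _ ≤ γ * (β * ‖x - y‖) := by gcongr; exact hBlip x y
      _ ≤ (1 - ε) * ‖x - y‖ := by rw [← mul_assoc]; gcongr
  have hcoco := norm_sub_sq_le_inner_of_norm_le hε0.le hγd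
  have h2ε : 0 < 2 - ε := by linarith
  refine norm_two_mul_smul_sub_le (by positivity) ?_
  rw [hKsub, one_div, ← div_eq_inv_mul, div_le_iff₀' h2ε]
  exact hcoco

/-- Lemma 5.1: with `K = W − γB`, (i) `K` is `ε`-strongly monotone; (ii) if `α = 1`
and `W = Id`, then `K` is `1/(2−ε)`-cocoercive, i.e. `(1/(2−ε))K` is firmly
nonexpansive (equivalently `2·(1/(2−ε))·K − Id` is nonexpansive). -/
theorem stmt_19
    {X : Type*} [NormedAddCommGroup X] [InnerProductSpace ℝ X] [CompleteSpace X]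
    (B W : X → X) (β α ε γ : ℝ) (hβ : 0 < β) (hα : 0 < α)
    (hBlip : ∀ x y, ‖B x - B y‖ ≤ β * ‖x - y‖)
    (hWsm : ∀ x y, α * ‖x - y‖ ^ 2 ≤ ⟪x - y, W x - W y⟫)
    (hε : ε ∈ Set.Ioo (0:ℝ) α)
    (hγ : γ ∈ Set.Ioc (0:ℝ) ((α - ε) / β))
    (K : X → X) (hK : ∀ x, K x = W x - γ • B x) :
    -- (i) K is ε-strongly monotone
    (∀ x y, ε * ‖x - y‖ ^ 2 ≤ ⟪x - y, K x - K y⟫) ∧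
    -- (ii) if α = 1 and W = Id, then (1/(2−ε))K is firmly nonexpansive,
    -- i.e. 2·(1/(2−ε))·K − Id is nonexpansive
    ((α = 1 ∧ W = fun x => x) →
      ∀ x y, ‖(2 * (1 / (2 - ε))) • (K x - K y) - (x - y)‖ ≤ ‖x - y‖) :=
  stmt_19_general B W β α ε γ hβ hBlip hWsm hε hγ K hK
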